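/- arXiv:2104.09884 — 5 statements merged into one kernel-verified Lean document; each statement's English description precedes it below -/
import Mathlib

section
/- Let f : S → ℝ₊ be prefix monotone, prefix submodular, normalized (f(∅)=0), and let o be an optimal sequence of length at most k for maximizing f subject to the length constraint, with OPT = f(o). Then for any sequence s there exists an item v ∈ V such that f(s ⊕ v) − f(s) ≥ (OPT − σ · f(s)) / k, where σ = σ_{o,|s|} is the curvature (for s = ∅ the statement holds with the convention f(∅)=0, i.e., there is v with f(v) ≥ OPT/k). -/
lemma key_gain_lemma {V : Type*} [Nonempty V]
    (f : List V → ℝ)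
    (hmono : ∀ s t : List V, s <+: t → f s ≤ f t)
    (hsub : ∀ (s t : List V) (v : V), s <+: t →
      f (t ++ [v]) - f t ≤ f (s ++ [v]) - f s) :
    ∀ (o s : List V), ∃ v : V,
      f (s ++ o) - f s ≤ o.length * (f (s ++ [v]) - f s) := by
  intro o
  induction o with
  | nil =>
    intro s
    obtain ⟨v⟩ := ‹Nonempty V›
    refine ⟨v, ?_⟩
    simp
  | cons a o' ih =>
    intro s
    obtain ⟨v', hv'⟩ := ih (s ++ [a])
    have hsub' : f ((s ++ [a]) ++ [v']) - f (s ++ [a]) ≤ f (s ++ [v']) - f s :=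
      hsub s (s ++ [a]) v' ⟨[a], rfl⟩
    -- choose the better of a and v'
    by_cases h : f (s ++ [v']) - f s ≤ f (s ++ [a]) - f s
    · refine ⟨a, ?_⟩
      have h2 : f ((s ++ [a]) ++ (o')) - f (s ++ [a]) ≤ o'.length * (f (s ++ [a]) - f s) := by
        calc f ((s ++ [a]) ++ o') - f (s ++ [a]) ≤ o'.length * (f ((s ++ [a]) ++ [v']) - f (s ++ [a])) := hv'
          _ ≤ o'.length * (f (s ++ [a]) - f s) := by
              apply mul_le_mul_of_nonneg_left (le_trans hsub' h) (by positivity)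
      have : f (s ++ a :: o') - f s
          = (f (s ++ [a]) - f s) + (f ((s ++ [a]) ++ o') - f (s ++ [a])) := by
        have e : s ++ [a] ++ o' = s ++ a :: o' := by simp
        rw [← e]; ring
      rw [this]
      simp only [List.length_cons]
      push_cast
      nlinarith [h2]
    · push_neg at h
      refine ⟨v', ?_⟩
      have ha : f (s ++ [a]) - f s ≤ f (s ++ [v']) - f s := le_of_lt h
      have h2 : f ((s ++ [a]) ++ o') - f (s ++ [a]) ≤ o'.length * (f (s ++ [v']) - f s) := by
        calc f ((s ++ [a]) ++ o') - f (s ++ [a]) ≤ o'.length * (f ((s ++ [a]) ++ [v']) - f (s ++ [a])) := hv'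
          _ ≤ o'.length * (f (s ++ [v']) - f s) := by
              apply mul_le_mul_of_nonneg_left hsub' (by positivity)
      have heq : f (s ++ a :: o') - f s
          = (f (s ++ [a]) - f s) + (f ((s ++ [a]) ++ o') - f (s ++ [a])) := by
        have e : s ++ [a] ++ o' = s ++ a :: o' := by simp
        rw [← e]; ring
      rw [heq]
      simp only [List.length_cons]
      push_cast
      nlinarith [h2, ha]

/-- For a prefix monotone, prefix submodular, normalized, nonnegative
sequence function `f`, an optimal sequence `o` of length at most `k` (so `OPT = f o`),
and any sequence `s`, there exists an item `v` with
`f (s ⊕ v) − f s ≥ (OPT − σ · f s) / k`, where `σ = σ_{o,|s|}` is the curvature,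
i.e., `σ` dominates each curvature term `1 − (f (t ⊕ o) − f o)/f t` for
`0 < |t| ≤ |s|` (written multiplicatively as `f t · (1 − σ) ≤ f (t ⊕ o) − f o`). -/
theorem exists_item_gain_ge_of_prefix_monotone_submodular {V : Type*} [Nonempty V]
    (f : List V → ℝ)
    (hmono : ∀ s t : List V, s <+: t → f s ≤ f t)
    (hsub : ∀ (s t : List V) (v : V), s <+: t →
      f (t ++ [v]) - f t ≤ f (s ++ [v]) - f s)
    (hzero : f [] = 0) (hnonneg : ∀ s : List V, 0 ≤ f s)
    (k : ℕ) (hk : 1 ≤ k) (o : List V) (ho : o.length ≤ k)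
    (hopt : ∀ t : List V, t.length ≤ k → f t ≤ f o)
    (s : List V) (σ : ℝ)
    (hσ : ∀ t : List V, 0 < t.length → t.length ≤ s.length →
      f t * (1 - σ) ≤ f (t ++ o) - f o) :
    ∃ v : V, (f o - σ * f s) / k ≤ f (s ++ [v]) - f s := by
  obtain ⟨v, hv⟩ := key_gain_lemma f hmono hsub o s
  refine ⟨v, ?_⟩
  have hg : 0 ≤ f (s ++ [v]) - f s := by
    have := hmono s (s ++ [v]) ⟨[v], rfl⟩; linarith
  have hko : (o.length : ℝ) ≤ (k : ℝ) := by exact_mod_cast ho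
  have hkv : (o.length : ℝ) * (f (s ++ [v]) - f s) ≤ k * (f (s ++ [v]) - f s) :=
    mul_le_mul_of_nonneg_right hko hg
  have hlow : f o - σ * f s ≤ f (s ++ o) - f s := by
    rcases Nat.eq_zero_or_pos s.length with h0 | hpos
    · have hs : s = [] := List.length_eq_zero_iff.mp h0
      subst hs; simp [hzero]
    · have := hσ s hpos le_rfl
      nlinarith
  have hkpos : (0:ℝ) < k := by exact_mod_cast hk
  rw [div_le_iff₀ hkpos]
  calc f o - σ * f s ≤ f (s ++ o) - f s := hlow
    _ ≤ o.length * (f (s ++ [v]) - f s) := hv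
    _ ≤ k * (f (s ++ [v]) - f s) := hkv
    _ = (f (s ++ [v]) - f s) * k := by ring
end

section
/- Let OPT ≥ 0 and k ≥ 1, and let a sequence of nonnegative reals a₀, a₁, …, a_k satisfy a₀ = 0 and a_{i+1} ≥ a_i + (OPT − σ a_i)/k for all 0 ≤ i < k, where 0 < σ ≤ 1. Then a_k ≥ (1/σ)(1 − (1 − σ/k)^k)·OPT. -/
/-! The step inequality says `a (i + 1) ≥ c · a i + OPT / k` with `c = 1 - σ / k ∈ [0, 1)`.
Unrolling this affine recurrence from `a 0 = 0` gives `a k ≥ (OPT / k) ∑_{i<k} cⁱ`, and the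
geometric sum equals `(1 - cᵏ) / (1 - c) = (k / σ) (1 - cᵏ)`. -/

open Finset

theorem pow_mul_add_mul_geom_sum_le {R : Type*} [CommSemiring R] [PartialOrder R]
    [IsOrderedRing R] {a : ℕ → R} {b c : R} {n : ℕ} (hc : 0 ≤ c)
    (h : ∀ i < n, c * a i + b ≤ a (i + 1)) :
    c ^ n * a 0 + b * ∑ i ∈ range n, c ^ i ≤ a n := by
  induction n with
  | zero => simp
  | succ n ih =>
    have ih := ih fun i hi => h i (hi.trans n.lt_succ_self)
    calc c ^ (n + 1) * a 0 + b * ∑ i ∈ range (n + 1), c ^ i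
        = c * (c ^ n * a 0 + b * ∑ i ∈ range n, c ^ i) + b := by
          rw [geom_sum_succ]; ring
      _ ≤ c * a n + b := by gcongr
      _ ≤ a (n + 1) := h n n.lt_succ_self

theorem greedy_recurrence_curvature_general (OPT σ : ℝ)
    (hσ0 : 0 < σ) (hσ1 : σ ≤ 1) (k : ℕ) (hk : 1 ≤ k)
    (a : ℕ → ℝ) (ha0 : a 0 = 0)
    (hstep : ∀ i < k, a i + (OPT - σ * a i) / k ≤ a (i + 1)) :
    (1 / σ) * (1 - (1 - σ / k) ^ k) * OPT ≤ a k := by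
  have hk0 : (0 : ℝ) < k := by exact_mod_cast hk
  have hc : 0 ≤ 1 - σ / k := by
    rw [sub_nonneg, div_le_one hk0]
    exact hσ1.trans (by exact_mod_cast hk)
  have hrec : ∀ i < k, (1 - σ / k) * a i + OPT / k ≤ a (i + 1) := fun i hi => by
    convert hstep i hi using 1
    field_simp
    ring
  calc (1 / σ) * (1 - (1 - σ / k) ^ k) * OPT
      = (1 - σ / k) ^ k * a 0 + OPT / k * ∑ i ∈ range k, (1 - σ / k) ^ i := by
        rw [ha0, ← mul_neg_geom_sum]
        field_simp
        ring
    _ ≤ a k := pow_mul_add_mul_geom_sum_le hc hrec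

/-- If nonnegative reals `a₀,…,a_k` satisfy `a₀ = 0` and
`a_{i+1} ≥ a_i + (OPT − σ a_i)/k` for `0 ≤ i < k`, where `OPT ≥ 0`, `k ≥ 1`,
`0 < σ ≤ 1`, then `a_k ≥ (1/σ)(1 − (1 − σ/k)^k)·OPT`. -/
theorem greedy_recurrence_curvature (OPT σ : ℝ) (hOPT : 0 ≤ OPT)
    (hσ0 : 0 < σ) (hσ1 : σ ≤ 1) (k : ℕ) (hk : 1 ≤ k)
    (a : ℕ → ℝ) (ha0 : a 0 = 0) (hnonneg : ∀ i ≤ k, 0 ≤ a i)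
    (hstep : ∀ i < k, a i + (OPT - σ * a i) / k ≤ a (i + 1)) :
    (1 / σ) * (1 - (1 - σ / k) ^ k) * OPT ≤ a k :=
  greedy_recurrence_curvature_general OPT σ hσ0 hσ1 k hk a ha0 hstep
end

section
/- Let OPT ≥ 0 and k ≥ 1, and let nonnegative reals a₀, …, a_k satisfy a₀ = 0 and a_{i+1} ≥ a_i + (OPT − a_i)/k for all 0 ≤ i < k. Then a_k ≥ (1 − (1 − 1/k)^k)·OPT ≥ (1 − 1/e)·OPT. -/
/-- If nonnegative reals `a₀,…,a_k` satisfy `a₀ = 0` and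
`a_{i+1} ≥ a_i + (OPT − a_i)/k` for `0 ≤ i < k`, where `OPT ≥ 0`, `k ≥ 1`, then
`a_k ≥ (1 − (1 − 1/k)^k)·OPT ≥ (1 − 1/e)·OPT`. -/
theorem greedy_recurrence (OPT : ℝ) (hOPT : 0 ≤ OPT) (k : ℕ) (hk : 1 ≤ k)
    (a : ℕ → ℝ) (ha0 : a 0 = 0) (hnonneg : ∀ i ≤ k, 0 ≤ a i)
    (hstep : ∀ i < k, a i + (OPT - a i) / k ≤ a (i + 1)) :
    (1 - (1 - 1 / (k : ℝ)) ^ k) * OPT ≤ a k ∧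
    (1 - 1 / Real.exp 1) * OPT ≤ (1 - (1 - 1 / (k : ℝ)) ^ k) * OPT := by
  have hk0 : (0:ℝ) < k := by positivity
  have hkinv : (1:ℝ)/k ≤ 1 := by
    rw [div_le_one hk0]; exact_mod_cast hk
  have hnn : (0:ℝ) ≤ 1 - 1/k := by linarith
  -- main induction
  have key : ∀ i ≤ k, OPT - a i ≤ (1 - 1/(k:ℝ))^i * OPT := by
    intro i hi
    induction i with
    | zero => simp [ha0]
    | succ n ih =>
      have hn : n ≤ k := Nat.le_of_succ_le hi
      have hlt : n < k := Nat.lt_of_succ_le hi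
      have h1 := ih hn
      have h2 := hstep n hlt
      have : OPT - a (n+1) ≤ (1 - 1/(k:ℝ)) * (OPT - a n) := by
        have : OPT - (a n + (OPT - a n)/k) = (1 - 1/(k:ℝ)) * (OPT - a n) := by
          field_simp; ring
        nlinarith
      calc OPT - a (n+1) ≤ (1 - 1/(k:ℝ)) * (OPT - a n) := this
        _ ≤ (1 - 1/(k:ℝ)) * ((1 - 1/(k:ℝ))^n * OPT) := by
            exact mul_le_mul_of_nonneg_left h1 hnn
        _ = (1 - 1/(k:ℝ))^(n+1) * OPT := by ring
  have h1 : (1 - (1 - 1 / (k : ℝ)) ^ k) * OPT ≤ a k := by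
    have := key k le_rfl
    nlinarith
  refine ⟨h1, ?_⟩
  have hexp : (1 - 1/(k:ℝ))^k ≤ 1 / Real.exp 1 := by
    have h1k : 1 - 1/(k:ℝ) ≤ Real.exp (-(1/k)) := by
      have := Real.add_one_le_exp (-(1/(k:ℝ)))
      linarith
    calc (1 - 1/(k:ℝ))^k ≤ (Real.exp (-(1/k)))^k := pow_le_pow_left₀ hnn h1k k
      _ = Real.exp (-(1/k) * k) := by rw [← Real.exp_nat_mul]; ring_nf
      _ = Real.exp (-1) := by
          congr 1; field_simp
      _ = 1 / Real.exp 1 := by rw [Real.exp_neg]; ring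
  nlinarith
end

section
/- Let f : S → ℝ₊ be weakly monotone and strongly submodular, let o be optimal with |o| ≤ k and f(o) = OPT. Then for any sequence s there exists a sequence s' obtained from s by inserting one item of V into some position of s (so s is a subsequence of s' and |s'| = |s| + 1) with f(s') − f(s) ≥ (OPT − f(s))/k. -/
/-!
Suppose every insertion of one item into `s` gains less than `c = (f o - f s) / k`. Strong
submodularity lets one remove the items of a proper supersequence `t` of `s` one at a time,
always the last item of `t` that is not matched in `s`: the loss of each removal is bounded by
the gain of inserting that item into `s` at the corresponding position. Hence
`f t - f s < (|t| - |s|) c`. Weak monotonicity supplies a supersequence `w` of `s` and `o` with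
`|w| - |s| ≤ k` and `f o ≤ f w`, which contradicts this bound when `c > 0`; when `c ≤ 0` a
supersequence of `s` and `s ++ [v]` with value at least `f s` does.
-/

namespace List.Sublist

variable {V : Type*}

theorem exists_eq_append_cons_of_ne : ∀ {s t : List V}, s <+ t → s ≠ t →
    ∃ (a : List V) (v : V) (b s₁ : List V), t = a ++ v :: b ∧ s = s₁ ++ b ∧ s₁ <+ a
  | _, _, .slnil, hne => absurd rfl hne
  | s, _, .cons v (l₂ := t) hst, _ => by
    by_cases heq : s = t
    · exact ⟨[], v, t, [], rfl, heq, nil_sublist _⟩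
    · obtain ⟨a, u, b, s₁, rfl, rfl, hsub⟩ := exists_eq_append_cons_of_ne hst heq
      exact ⟨v :: a, u, b, s₁, rfl, rfl, hsub.cons v⟩
  | _, _, .cons_cons v hst, hne => by
    obtain ⟨a, u, b, s₁, rfl, rfl, hsub⟩ :=
      exists_eq_append_cons_of_ne hst fun heq => hne (heq ▸ rfl)
    exact ⟨v :: a, u, b, v :: s₁, rfl, rfl, hsub.cons_cons v⟩

end List.Sublist

section

variable {V : Type*}

def StronglySubmodular (f : List V → ℝ) : Prop :=
  ∀ (s t o : List V) (v : V), s.Sublist t →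
    f (t ++ [v] ++ o) - f (t ++ o) ≤ f (s ++ [v] ++ o) - f (s ++ o)

namespace StronglySubmodular

variable {f : List V → ℝ} {s t : List V} {c : ℝ}

theorem exists_removal_le_insertion (hf : StronglySubmodular f) (hst : s.Sublist t)
    (hne : s ≠ t) :
    ∃ u s', s.Sublist u ∧ u.length + 1 = t.length ∧
      s.Sublist s' ∧ s'.length = s.length + 1 ∧ f t - f u ≤ f s' - f s := by
  obtain ⟨a, v, b, s₁, rfl, rfl, hsub⟩ := hst.exists_eq_append_cons_of_ne hne
  refine ⟨a ++ b, s₁ ++ v :: b, hsub.append (List.Sublist.refl b), by simp; omega,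
    (b.sublist_cons_self v).append_left s₁, by simp; omega, ?_⟩
  simpa using hf s₁ a b v hsub

theorem sub_le_of_insertion_gain_le (hf : StronglySubmodular f)
    (hc : ∀ s', s.Sublist s' → s'.length = s.length + 1 → f s' - f s ≤ c)
    {t : List V} (hst : s.Sublist t) : f t - f s ≤ ((t.length : ℝ) - s.length) * c := by
  rcases eq_or_ne s t with rfl | hne
  · simp
  obtain ⟨u, s', hsu, hu, hss', hs', hgain⟩ := hf.exists_removal_le_insertion hst hne
  have hsub := sub_le_of_insertion_gain_le hf hc hsu
  have hlen : ((t.length : ℝ) - s.length) * c = (u.length - s.length) * c + c := by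
    rw [← hu]; push_cast; ring
  linarith [hc s' hss' hs']
termination_by t.length
decreasing_by omega

theorem sub_lt_of_insertion_gain_lt (hf : StronglySubmodular f)
    (hc : ∀ s', s.Sublist s' → s'.length = s.length + 1 → f s' - f s < c)
    (hst : s.Sublist t) (hne : s ≠ t) : f t - f s < ((t.length : ℝ) - s.length) * c := by
  obtain ⟨u, s', hsu, hu, hss', hs', hgain⟩ := hf.exists_removal_le_insertion hst hne
  have hsub := hf.sub_le_of_insertion_gain_le (fun s' h h' => (hc s' h h').le) hsu
  have hlen : ((t.length : ℝ) - s.length) * c = (u.length - s.length) * c + c := by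
    rw [← hu]; push_cast; ring
  linarith [hc s' hss' hs']

end StronglySubmodular

end

theorem exists_insertion_gain_ge_general {V : Type*} [Nonempty V] (f : List V → ℝ)
    (hweak : ∀ s t : List V, ∃ w : List V, s.Sublist w ∧ t.Sublist w ∧
      w.length ≤ s.length + t.length ∧ f s ≤ f w)
    (hstrong : ∀ (s t o : List V) (v : V), s.Sublist t →
      f (t ++ [v] ++ o) - f (t ++ o) ≤ f (s ++ [v] ++ o) - f (s ++ o))
    (k : ℕ) (o : List V) (ho : o.length ≤ k)
    (s : List V) :
    ∃ s' : List V, s.Sublist s' ∧ s'.length = s.length + 1 ∧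
      (f o - f s) / k ≤ f s' - f s := by
  by_contra! hlt
  have hf : StronglySubmodular f := hstrong
  set c := (f o - f s) / k with hc_def
  rcases le_or_gt c 0 with hc | hc
  · obtain ⟨v⟩ := ‹Nonempty V›
    obtain ⟨w, hsw, hw, -, hfw⟩ := hweak s (s ++ [v])
    have hlen : s.length < w.length := by simpa using hw.length_le
    have hgain := hf.sub_lt_of_insertion_gain_lt hlt hsw (by rintro rfl; omega)
    have : ((w.length : ℝ) - s.length) * c ≤ 0 :=
      mul_nonpos_of_nonneg_of_nonpos (by simp [hlen.le]) hc
    linarith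
  · obtain ⟨w, how, hsw, hwl, hfw⟩ := hweak o s
    have hk : (k : ℝ) ≠ 0 := by rintro h; simp [hc_def, h] at hc
    rcases eq_or_ne s w with rfl | hne
    · exact hc.not_ge (div_nonpos_of_nonpos_of_nonneg (by linarith) k.cast_nonneg)
    have hgain := hf.sub_lt_of_insertion_gain_lt hlt hsw hne
    have hwk : (w.length : ℝ) - s.length ≤ k := by
      rw [sub_le_iff_le_add]; exact_mod_cast hwl.trans (by omega)
    have hkc : (k : ℝ) * c = f o - f s := mul_div_cancel₀ _ hk
    linarith [mul_le_mul_of_nonneg_right hwk hc.le]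

/-- For a weakly monotone, strongly submodular, nonnegative sequence
function `f` and an optimal sequence `o` with `|o| ≤ k` and `f o = OPT`, for any
sequence `s` there is a sequence `s'` obtained from `s` by inserting one item
(so `s` is a subsequence of `s'` and `|s'| = |s| + 1`) with
`f s' − f s ≥ (OPT − f s)/k`. -/
theorem exists_insertion_gain_ge {V : Type*} [Nonempty V] (f : List V → ℝ)
    (hnonneg : ∀ s : List V, 0 ≤ f s)
    (hweak : ∀ s t : List V, ∃ w : List V, s.Sublist w ∧ t.Sublist w ∧
      w.length ≤ s.length + t.length ∧ f s ≤ f w)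
    (hstrong : ∀ (s t o : List V) (v : V), s.Sublist t →
      f (t ++ [v] ++ o) - f (t ++ o) ≤ f (s ++ [v] ++ o) - f (s ++ o))
    (k : ℕ) (hk : 1 ≤ k) (o : List V) (ho : o.length ≤ k)
    (hopt : ∀ t : List V, t.length ≤ k → f t ≤ f o)
    (s : List V) :
    ∃ s' : List V, s.Sublist s' ∧ s'.length = s.length + 1 ∧
      (f o - f s) / k ≤ f s' - f s :=
  exists_insertion_gain_ge_general f hweak hstrong k o ho s
end

section
/- Let OPT ≥ 0, k ≥ 2, and let nonnegative reals b₀, b₁, …, b_m with m = ⌈(k−1)/2⌉ satisfy b₀ = 0 and b_{i+1} ≥ b_i + (OPT − b_i)/k. Then b_m ≥ (1 − (1 − 1/k)^{⌈(k−1)/2⌉})·OPT ≥ (1 − e^{−(k−1)/(2k)})·OPT. -/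
/-- Let `OPT ≥ 0`, `k ≥ 2`, `m = ⌈(k−1)/2⌉`, and let nonnegative reals
`b₀,…,b_m` satisfy `b₀ = 0` and `b_{i+1} ≥ b_i + (OPT − b_i)/k`. Then
`b_m ≥ (1 − (1 − 1/k)^m)·OPT ≥ (1 − e^{−(k−1)/(2k)})·OPT`. -/
theorem dag_greedy_recurrence (OPT : ℝ) (hOPT : 0 ≤ OPT) (k : ℕ) (hk : 2 ≤ k)
    (m : ℕ) (hm : m = ⌈((k : ℝ) - 1) / 2⌉₊)
    (b : ℕ → ℝ) (hb0 : b 0 = 0) (hnonneg : ∀ i ≤ m, 0 ≤ b i)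
    (hstep : ∀ i < m, b i + (OPT - b i) / k ≤ b (i + 1)) :
    (1 - (1 - 1 / (k : ℝ)) ^ m) * OPT ≤ b m ∧
    (1 - Real.exp (-((k : ℝ) - 1) / (2 * k))) * OPT ≤
      (1 - (1 - 1 / (k : ℝ)) ^ m) * OPT := by
  have hk0 : (0 : ℝ) < k := by positivity
  have hk1 : (1 : ℝ) ≤ k := by exact_mod_cast Nat.one_le_of_lt hk
  have hq0 : (0 : ℝ) ≤ 1 - 1 / k := by
    rw [sub_nonneg, div_le_one hk0]; exact hk1
  have key : ∀ i ≤ m, OPT - b i ≤ (1 - 1 / (k : ℝ)) ^ i * OPT := by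
    intro i
    induction i with
    | zero => intro _; simp [hb0]
    | succ n ih =>
      intro h
      have hn : n ≤ m := Nat.le_of_succ_le h
      have h1 : OPT - b (n + 1) ≤ (1 - 1 / (k : ℝ)) * (OPT - b n) := by
        have := hstep n (Nat.lt_of_succ_le h)
        have : OPT - b (n + 1) ≤ OPT - b n - (OPT - b n) / k := by linarith
        calc OPT - b (n + 1) ≤ OPT - b n - (OPT - b n) / k := this
          _ = (1 - 1 / (k : ℝ)) * (OPT - b n) := by ring
      calc OPT - b (n + 1) ≤ (1 - 1 / (k : ℝ)) * (OPT - b n) := h1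
        _ ≤ (1 - 1 / (k : ℝ)) * ((1 - 1 / (k : ℝ)) ^ n * OPT) :=
            mul_le_mul_of_nonneg_left (ih hn) hq0
        _ = (1 - 1 / (k : ℝ)) ^ (n + 1) * OPT := by ring
  constructor
  · have := key m le_rfl; linarith
  · apply mul_le_mul_of_nonneg_right _ hOPT
    have h1 : (1 - 1 / (k : ℝ)) ^ m ≤ Real.exp (-(1 / k)) ^ m :=
      pow_le_pow_left₀ hq0 (by linarith [Real.add_one_le_exp (-(1 / (k : ℝ)))]) m
    have h2 : Real.exp (-(1 / (k : ℝ))) ^ m = Real.exp (-(m / k)) := by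
      rw [← Real.exp_nat_mul]; ring_nf
    have hmge : ((k : ℝ) - 1) / 2 ≤ m := by rw [hm]; exact Nat.le_ceil _
    have h3 : Real.exp (-((m : ℝ) / k)) ≤ Real.exp (-((k : ℝ) - 1) / (2 * k)) := by
      apply Real.exp_le_exp.2
      rw [neg_div, neg_le_neg_iff, div_le_div_iff₀ (by positivity) hk0]
      nlinarith
    linarith [h1, h2 ▸ h1, h3]
end
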